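/- Let F be a field of characteristic not 2 and q a nondegenerate quadratic form over F. Then q is a group form over F if and only if q (extended by base change) is a group form over the Laurent series field F((x)). -/

import Mathlib

open QuadraticMap

/-- `DSet F q` is the set of nonzero values of `F` represented by the quadratic form `q`. -/
def DSet (F : Type*) [Field F] {V : Type*} [AddCommGroup V] [Module F V]
    (q : QuadraticForm F V) : Set F :=
  {a : F | a ≠ 0 ∧ ∃ v : V, q v = a}

/-- `HSet F q` is the set of `a ∈ F×` such that `q ⊥ (-a)q` (i.e. `⟨1,-a⟩ ⊗ q`) is isotropic. -/
def HSet (F : Type*) [Field F] {V : Type*} [AddCommGroup V] [Module F V]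
    (q : QuadraticForm F V) : Set F :=
  {a : F | a ≠ 0 ∧ ¬ (QuadraticMap.prod q ((-a) • q)).Anisotropic}

/-- `GSet F q` is the group of similarity factors of `q`: those `a ∈ F×` with `aq ≅ q`. -/
def GSet (F : Type*) [Field F] {V : Type*} [AddCommGroup V] [Module F V]
    (q : QuadraticForm F V) : Set F :=
  {a : F | a ≠ 0 ∧ QuadraticMap.Equivalent (a • q) q}

/-- `q` is a group form if its set of nonzero represented values is a subgroup of `F×`. -/
def IsGroupForm (F : Type*) [Field F] {V : Type*} [AddCommGroup V] [Module F V]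
    (q : QuadraticForm F V) : Prop :=
  (1 : F) ∈ DSet F q ∧ (∀ a ∈ DSet F q, ∀ b ∈ DSet F q, a * b ∈ DSet F q) ∧
    ∀ a ∈ DSet F q, a⁻¹ ∈ DSet F q

/-- `q` is round if its value set coincides with its group of similarity factors. -/
def IsRound (F : Type*) [Field F] {V : Type*} [AddCommGroup V] [Module F V]
    (q : QuadraticForm F V) : Prop :=
  DSet F q = GSet F q

/-- Nondegeneracy of a quadratic form, via its polar form. -/
def NondegQF (F : Type*) [Field F] {V : Type*} [AddCommGroup V] [Module F V]
    (q : QuadraticForm F V) : Prop :=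
  ∀ v : V, (∀ w : V, polar q v w = 0) → v = 0

/-- Base change (scalar extension) of a quadratic form on `Fin n → F` along `F → K`,
given by extending the Gram matrix. -/
noncomputable def baseChangeFin {F : Type*} [Field F] [Invertible (2 : F)]
    (K : Type*) [Field K] [Algebra F K] {n : ℕ} (q : QuadraticForm F (Fin n → F)) :
    QuadraticForm K (Fin n → K) :=
  ((QuadraticForm.toMatrix' q).map (algebraMap F K)).toQuadraticMap'

/-!
If `q` is isotropic, nondegeneracy makes it universal, over `F` and over `F⸨X⸩` alike, so both
sides hold. If `q` is anisotropic, rescale a vector over `F⸨X⸩` by its entry of largest valuation: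
its entries become power series with nonzero reduction `y`, so its value is `c² · (q y + X·…)`,
and `q y + X·…` is `q y` times a square since `2` is invertible (Springer). So the values over
`F⸨X⸩` are exactly the `c² · a` with `a` a value over `F`; as a constant that is a square in
`F⸨X⸩` is a square in `F` (compare leading coefficients), the group property passes both ways.
-/

section Universal

variable {L V : Type*} [Field L] [AddCommGroup V] [Module L V]

theorem QuadraticMap.surjective_of_isotropic (Q : QuadraticForm L V) {v w : V} (hv : Q v = 0)
    (hvw : polar Q v w ≠ 0) : Function.Surjective Q := by
  intro a
  refine ⟨((a - Q w) / polar Q v w) • v + w, ?_⟩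
  have hexpand : ∀ c : L, Q (c • v + w) = c * polar Q v w + Q w := fun c ↦ by
    have h := polar_smul_left (Q := Q) c v w
    rw [polar, QuadraticMap.map_smul, hv, smul_zero, smul_eq_mul] at h
    linear_combination h
  rw [hexpand, div_mul_cancel₀ _ hvw, sub_add_cancel]

theorem NondegQF.exists_isotropic_polar_ne_zero {Q : QuadraticForm L V} (hQ : NondegQF L Q)
    (hiso : ¬ Q.Anisotropic) : ∃ v w, Q v = 0 ∧ polar Q v w ≠ 0 := by
  simp only [Anisotropic, not_forall] at hiso
  obtain ⟨v, hv, hv0⟩ := hiso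
  contrapose! hv0
  exact hQ v fun w ↦ hv0 v w hv

theorem isGroupForm_of_surjective {Q : QuadraticForm L V} (hQ : Function.Surjective Q) :
    IsGroupForm L Q := by
  have hD (a : L) (ha : a ≠ 0) : a ∈ DSet L Q := ⟨ha, hQ a⟩
  exact ⟨hD 1 one_ne_zero, fun a ha b hb ↦ hD _ (mul_ne_zero ha.1 hb.1),
    fun a ha ↦ hD _ (inv_ne_zero ha.1)⟩

theorem mul_self_mul_mem_dSet {Q : QuadraticForm L V} {a e : L} (he : e ≠ 0)
    (ha : a ∈ DSet L Q) : e * e * a ∈ DSet L Q := by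
  obtain ⟨ha0, v, rfl⟩ := ha
  exact ⟨by positivity, e • v, by rw [QuadraticMap.map_smul, smul_eq_mul]⟩

end Universal

section GroupFormTransfer

variable {F K V W : Type*} [Field F] [Field K] [Algebra F K] [AddCommGroup V] [Module F V]
  [AddCommGroup W] [Module K W] {q : QuadraticForm F V} {Q : QuadraticForm K W}

theorem IsGroupForm.lift_of_mem_dSet_iff
    (hD : ∀ α, α ∈ DSet K Q ↔ ∃ c ≠ 0, ∃ a ∈ DSet F q, α = c ^ 2 * algebraMap F K a)
    (h : IsGroupForm F q) : IsGroupForm K Q := by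
  obtain ⟨h1, hmul, hinv⟩ := h
  refine ⟨(hD 1).2 ⟨1, one_ne_zero, 1, h1, by simp⟩, ?_, ?_⟩
  · intro α hα β hβ
    obtain ⟨c, hc, a, ha, rfl⟩ := (hD α).1 hα
    obtain ⟨d, hd, b, hb, rfl⟩ := (hD β).1 hβ
    exact (hD _).2 ⟨c * d, mul_ne_zero hc hd, a * b, hmul a ha b hb, by rw [map_mul]; ring⟩
  · intro α hα
    obtain ⟨c, hc, a, ha, rfl⟩ := (hD α).1 hα
    exact (hD _).2 ⟨c⁻¹, inv_ne_zero hc, a⁻¹, hinv a ha, by rw [map_inv₀, mul_inv, inv_pow]⟩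

theorem IsGroupForm.descend_of_mem_dSet_iff
    (hsq : ∀ a : F, IsSquare (algebraMap F K a) → IsSquare a)
    (hD : ∀ α, α ∈ DSet K Q ↔ ∃ c ≠ 0, ∃ a ∈ DSet F q, α = c ^ 2 * algebraMap F K a)
    (h : IsGroupForm K Q) : IsGroupForm F q := by
  have hlift {a : F} (ha : a ∈ DSet F q) : algebraMap F K a ∈ DSet K Q :=
    (hD _).2 ⟨1, one_ne_zero, a, ha, by simp⟩
  have hdescend {a : F} (ha : a ≠ 0) (h : algebraMap F K a ∈ DSet K Q) : a ∈ DSet F q := by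
    obtain ⟨c, -, b, hb, hab⟩ := (hD _).1 h
    have hb0 : algebraMap F K b ≠ 0 := by simpa using hb.1
    obtain ⟨e, he⟩ := hsq (a / b)
      ⟨c, by rw [map_div₀, hab, mul_div_cancel_right₀ _ hb0, pow_two]⟩
    have he0 : e ≠ 0 := by
      rintro rfl
      exact div_ne_zero ha hb.1 (by simpa using he)
    rw [← div_mul_cancel₀ a hb.1, he]
    exact mul_self_mul_mem_dSet he0 hb
  obtain ⟨h1, hmul, hinv⟩ := h
  refine ⟨hdescend one_ne_zero (by simpa using h1), fun a ha b hb ↦ ?_, fun a ha ↦ ?_⟩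
  · exact hdescend (mul_ne_zero ha.1 hb.1) (by simpa using hmul _ (hlift ha) _ (hlift hb))
  · exact hdescend (inv_ne_zero ha.1) (by simpa using hinv _ (hlift ha))

end GroupFormTransfer

section BaseChange

theorem Matrix.toQuadraticForm'_map_apply {ι R S : Type*} [Fintype ι] [DecidableEq ι]
    [CommRing R] [CommRing S] (f : R →+* S) (M : Matrix ι ι R) (v : ι → R) :
    (M.map f).toQuadraticForm' (f ∘ v) = f (M.toQuadraticForm' v) := by
  simp [Matrix.toQuadraticForm', Matrix.toLinearMap₂'_apply, map_sum, map_mul]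

theorem QuadraticForm.toQuadraticForm'_toMatrix' {ι R : Type*} [Fintype ι] [DecidableEq ι]
    [CommRing R] [Invertible (2 : R)] (q : QuadraticForm R (ι → R)) :
    q.toMatrix'.toQuadraticForm' = q := by
  rw [Matrix.toQuadraticForm', QuadraticForm.toMatrix', Matrix.toLinearMap₂'_toMatrix',
    toQuadraticMap_associated]

variable {F : Type*} [Field F] [Invertible (2 : F)] {n : ℕ} (q : QuadraticForm F (Fin n → F))
  (K : Type*) [Field K] [Algebra F K]

theorem baseChangeFin_algebraMap_comp (v : Fin n → F) :
    baseChangeFin K q (algebraMap F K ∘ v) = algebraMap F K (q v) := by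
  change (q.toMatrix'.map (algebraMap F K)).toQuadraticForm' _ = _
  rw [Matrix.toQuadraticForm'_map_apply, QuadraticForm.toQuadraticForm'_toMatrix']

theorem surjective_baseChangeFin_of_isotropic {v w : Fin n → F} (hv : q v = 0)
    (hvw : polar q v w ≠ 0) : Function.Surjective (baseChangeFin K q) := by
  refine (baseChangeFin K q).surjective_of_isotropic (v := algebraMap F K ∘ v)
    (w := algebraMap F K ∘ w) ?_ ?_
  · rw [baseChangeFin_algebraMap_comp, hv, map_zero]
  · have hadd : algebraMap F K ∘ v + algebraMap F K ∘ w = algebraMap F K ∘ (v + w) :=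
      funext fun i ↦ (map_add _ _ _).symm
    rwa [polar, hadd, baseChangeFin_algebraMap_comp, baseChangeFin_algebraMap_comp,
      baseChangeFin_algebraMap_comp, ← map_sub, ← map_sub, ← polar, ne_eq, map_eq_zero]

theorem sq_mul_algebraMap_mem_dSet_baseChangeFin {c : K} (hc : c ≠ 0) {a : F}
    (ha : a ∈ DSet F q) : c ^ 2 * algebraMap F K a ∈ DSet K (baseChangeFin K q) := by
  obtain ⟨ha0, y, rfl⟩ := ha
  refine ⟨by simp [hc, ha0], c • (algebraMap F K ∘ y), ?_⟩
  rw [QuadraticMap.map_smul, baseChangeFin_algebraMap_comp, smul_eq_mul, pow_two]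

end BaseChange

open scoped PowerSeries LaurentSeries

namespace PowerSeries

variable {R : Type*} [CommRing R] [Invertible (2 : R)]

/-- Coefficients of a square root of `u`, read off from `[X^(k+1)] s ^ 2 = [X^(k+1)] u`. -/
noncomputable def sqrtCoeff (u : R⟦X⟧) : ℕ → R
  | 0 => 1
  | k + 1 => ⅟2 * (coeff (k + 1) u -
      ∑ i ∈ (Finset.range k).attach, sqrtCoeff u (i.1 + 1) * sqrtCoeff u (k - i.1))
termination_by k => k
decreasing_by
  · exact Nat.succ_lt_succ (Finset.mem_range.mp i.2)
  · exact Nat.lt_succ_of_le (Nat.sub_le _ _)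

theorem sqrtCoeff_succ (u : R⟦X⟧) (k : ℕ) :
    sqrtCoeff u (k + 1) = ⅟2 * (coeff (k + 1) u -
      ∑ i ∈ Finset.range k, sqrtCoeff u (i + 1) * sqrtCoeff u (k - i)) := by
  rw [sqrtCoeff, Finset.sum_attach (Finset.range k)
    (fun i ↦ sqrtCoeff u (i + 1) * sqrtCoeff u (k - i))]

theorem exists_sq_eq_of_constantCoeff_eq_one {u : R⟦X⟧} (hu : constantCoeff u = 1) :
    ∃ s : R⟦X⟧, s ^ 2 = u := by
  refine ⟨mk (sqrtCoeff u), ?_⟩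
  ext k
  rw [pow_two, coeff_mul]
  cases k with
  | zero => simp [sqrtCoeff, hu]
  | succ k =>
    rw [Finset.Nat.sum_antidiagonal_eq_sum_range_succ_mk, Finset.sum_range_succ,
      Finset.sum_range_succ']
    simp only [coeff_mk, Nat.succ_sub_succ, Nat.sub_zero, Nat.sub_self]
    have h0 : sqrtCoeff u 0 = 1 := by rw [sqrtCoeff]
    rw [h0, mul_one, one_mul, sqrtCoeff_succ]
    linear_combination (coeff (k + 1) u -
      ∑ i ∈ Finset.range k, sqrtCoeff u (i + 1) * sqrtCoeff u (k - i)) * invOf_mul_self (2 : R)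

end PowerSeries

theorem HahnSeries.isSquare_of_isSquare_C {Γ R : Type*} [AddCommMonoid Γ] [LinearOrder Γ]
    [IsOrderedCancelAddMonoid Γ] [CommRing R] [NoZeroDivisors R] {a : R}
    (h : IsSquare (C a : HahnSeries Γ R)) : IsSquare a := by
  obtain ⟨c, hc⟩ := h
  exact ⟨c.leadingCoeff, by rw [← leadingCoeff_mul, ← hc, C_apply, leadingCoeff_of_single]⟩

namespace LaurentSeries

variable {K : Type*} [Field K]

theorem isSquare_of_isSquare_algebraMap {a : K} (h : IsSquare (algebraMap K K⸨X⸩ a)) :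
    IsSquare a :=
  HahnSeries.isSquare_of_isSquare_C (by rwa [← algebraMap_apply])

theorem exists_eq_smul_ofPowerSeries_comp {ι : Type*} [Fintype ι] {v : ι → K⸨X⸩} (hv : v ≠ 0) :
    ∃ c : K⸨X⸩, ∃ p : ι → K⟦X⟧, v = c • (HahnSeries.ofPowerSeries ℤ K ∘ p) ∧ ∃ i, p i = 1 := by
  obtain ⟨j, hj⟩ := Function.ne_iff.mp hv
  have : Nonempty ι := ⟨j⟩
  obtain ⟨i, -, hi⟩ := Finset.univ.exists_max_image (fun i ↦ Valued.v (v i)) Finset.univ_nonempty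
  have hvi : v i ≠ 0 := by
    intro h0
    exact hj (by simpa [h0] using hi j (Finset.mem_univ j))
  have hval (k : ι) : Valued.v (v k / v i) ≤ 1 := by
    rw [map_div₀, div_le_one₀ (zero_lt_iff.mpr ((Valuation.ne_zero_iff _).mpr hvi))]
    exact hi k (Finset.mem_univ k)
  choose p hp using fun k ↦ (val_le_one_iff_eq_coe K _).mp (hval k)
  refine ⟨v i, p, funext fun k ↦ ?_, i, HahnSeries.ofPowerSeries_injective (Γ := ℤ) ?_⟩
  · simp [hp, mul_div_cancel₀ _ hvi]
  · simp [hp, hvi]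

end LaurentSeries

section Anisotropic

open PowerSeries

variable {F : Type*} [Field F] [Invertible (2 : F)] {n : ℕ} {q : QuadraticForm F (Fin n → F)}

theorem exists_baseChangeFin_eq_sq_mul_of_anisotropic (hq : q.Anisotropic)
    {v : Fin n → F⸨X⸩} (hv : v ≠ 0) :
    ∃ c : F⸨X⸩, ∃ y : Fin n → F, q y ≠ 0 ∧
      baseChangeFin F⸨X⸩ q v = c ^ 2 * algebraMap F F⸨X⸩ (q y) := by
  obtain ⟨c, p, rfl, i, hi⟩ := LaurentSeries.exists_eq_smul_ofPowerSeries_comp hv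
  set P := (q.toMatrix'.map C).toQuadraticForm' p
  set y := constantCoeff ∘ p
  have hP : baseChangeFin F⸨X⸩ q (HahnSeries.ofPowerSeries ℤ F ∘ p) =
      HahnSeries.ofPowerSeries ℤ F P := by
    rw [← Matrix.toQuadraticForm'_map_apply, Matrix.map_map]
    rfl
  have hP0 : constantCoeff P = q y := by
    have hCC : (constantCoeff ∘ C : F → F) = id := funext constantCoeff_C
    rw [← Matrix.toQuadraticForm'_map_apply, Matrix.map_map, hCC, Matrix.map_id,
      QuadraticForm.toQuadraticForm'_toMatrix']
  have hy : q y ≠ 0 := fun h ↦ by simpa [y, hi] using congrFun (hq y h) i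
  obtain ⟨s, hs⟩ := exists_sq_eq_of_constantCoeff_eq_one (u := C (q y)⁻¹ * P)
    (by rw [map_mul, constantCoeff_C, hP0, inv_mul_cancel₀ hy])
  have hPs : P = C (q y) * s ^ 2 := by
    rw [hs, ← mul_assoc, ← map_mul, mul_inv_cancel₀ hy, map_one, one_mul]
  refine ⟨c * HahnSeries.ofPowerSeries ℤ F s, y, hy, ?_⟩
  rw [QuadraticMap.map_smul, hP, hPs, map_mul, map_pow, HahnSeries.ofPowerSeries_C,
    ← LaurentSeries.algebraMap_apply, smul_eq_mul]
  ring

theorem mem_dSet_baseChangeFin_laurentSeries_iff (hq : q.Anisotropic) (α : F⸨X⸩) :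
    α ∈ DSet F⸨X⸩ (baseChangeFin F⸨X⸩ q) ↔
      ∃ c ≠ 0, ∃ a ∈ DSet F q, α = c ^ 2 * algebraMap F F⸨X⸩ a := by
  refine ⟨fun ⟨hα, v, hv⟩ ↦ ?_, fun ⟨c, hc, a, ha, hα⟩ ↦
    hα ▸ sq_mul_algebraMap_mem_dSet_baseChangeFin q _ hc ha⟩
  obtain ⟨c, y, hy, hvc⟩ := exists_baseChangeFin_eq_sq_mul_of_anisotropic hq
    (v := v) (by rintro rfl; exact hα (by simp [← hv]))
  refine ⟨c, ?_, q y, ⟨hy, y, rfl⟩, hv ▸ hvc⟩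
  rintro rfl
  exact hα (by simp [← hv, hvc])

end Anisotropic

theorem group_form_iff_group_form_laurentSeries_general
    (F : Type*) [Field F] [Invertible (2 : F)]
    {n : ℕ} (q : QuadraticForm F (Fin n → F)) (hq : NondegQF F q) :
    IsGroupForm F q ↔ IsGroupForm (LaurentSeries F) (baseChangeFin (LaurentSeries F) q) := by
  by_cases hiso : q.Anisotropic
  · have hD := mem_dSet_baseChangeFin_laurentSeries_iff hiso
    exact ⟨IsGroupForm.lift_of_mem_dSet_iff hD, IsGroupForm.descend_of_mem_dSet_iff
      (fun _ ↦ LaurentSeries.isSquare_of_isSquare_algebraMap) hD⟩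
  · obtain ⟨v, w, hv, hvw⟩ := hq.exists_isotropic_polar_ne_zero hiso
    exact iff_of_true (isGroupForm_of_surjective (q.surjective_of_isotropic hv hvw))
      (isGroupForm_of_surjective (surjective_baseChangeFin_of_isotropic q _ hv hvw))

theorem group_form_iff_group_form_laurentSeries
    (F : Type*) [Field F] [Invertible (2 : F)]
    {n : ℕ} (hn : 0 < n) (q : QuadraticForm F (Fin n → F)) (hq : NondegQF F q) :
    IsGroupForm F q ↔ IsGroupForm (LaurentSeries F) (baseChangeFin (LaurentSeries F) q) :=
  group_form_iff_group_form_laurentSeries_general F q hq
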